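/- The group P_k = ⟨a, b ∣ a b^{2^k} a⁻¹ b^{2^k}, b a² b⁻¹ a²⟩ is isomorphic to an amalgamated free product K₁ *_{ℤ²} K₂ of two Klein bottle groups K₁ = ⟨a, x ∣ a x a⁻¹ x⟩ and K₂ = ⟨y, b ∣ b y b⁻¹ y⟩, amalgamated along the subgroups ⟨a², x⟩ ≅ ℤ² and ⟨b^{2^k}, y⟩ ≅ ℤ² via the isomorphism sending x ↦ b^{2^k} and a² ↦ y. -/

import Mathlib

/-
In the amalgam x = b^(2^k) and y = a², so the defining relations of K₁ and K₂ become exactly the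
two relations of P_k, and a ↦ a, b ↦ b gives mutually inverse homomorphisms. The amalgamating maps
ℤ² → Kᵢ exist because in a Klein bottle group ⟨u, v ∣ u v u⁻¹ v⟩ every even power of u commutes
with v, and 2^k is even. They are injective: the exponent sum in u detects the u²-coordinate, and
v has infinite order because it maps to a rotation of the infinite dihedral group.
-/

/-- The relations of `P_k = ⟨a, b ∣ a b^(2^k) a⁻¹ b^(2^k), b a² b⁻¹ a²⟩`. -/
def PkRels (k : ℕ) : Set (FreeGroup (Fin 2)) :=
  { FreeGroup.of 0 * (FreeGroup.of 1) ^ (2 ^ k) * (FreeGroup.of 0)⁻¹ * (FreeGroup.of 1) ^ (2 ^ k),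
    FreeGroup.of 1 * (FreeGroup.of 0) ^ 2 * (FreeGroup.of 1)⁻¹ * (FreeGroup.of 0) ^ 2 }

abbrev Pk (k : ℕ) : Type := PresentedGroup (PkRels k)

/-- The Klein bottle group `K₁ = ⟨a, x ∣ a x a⁻¹ x⟩`, with `a = of 0`, `x = of 1`. -/
abbrev K₁ : Type :=
  PresentedGroup ({FreeGroup.of 0 * FreeGroup.of 1 * (FreeGroup.of 0)⁻¹ * FreeGroup.of 1} :
    Set (FreeGroup (Fin 2)))

/-- The Klein bottle group `K₂ = ⟨y, b ∣ b y b⁻¹ y⟩`, with `y = of 0`, `b = of 1`. -/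
abbrev K₂ : Type :=
  PresentedGroup ({FreeGroup.of 1 * FreeGroup.of 0 * (FreeGroup.of 1)⁻¹ * FreeGroup.of 0} :
    Set (FreeGroup (Fin 2)))

def ka : K₁ := PresentedGroup.of 0
def kx : K₁ := PresentedGroup.of 1
def ky : K₂ := PresentedGroup.of 0
def kb : K₂ := PresentedGroup.of 1

/-- The two Klein bottle groups, as a `Bool`-indexed family. -/
def kleinFam : Bool → Type := fun i => match i with
  | true => K₁
  | false => K₂

instance kleinFamGroup : ∀ i, Group (kleinFam i) := fun i => match i with
  | true => inferInstanceAs (Group K₁)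
  | false => inferInstanceAs (Group K₂)

/-- First generator of `ℤ²` (written multiplicatively). -/
def e₁ : Multiplicative (ℤ × ℤ) := Multiplicative.ofAdd (1, 0)

/-- Second generator of `ℤ²` (written multiplicatively). -/
def e₂ : Multiplicative (ℤ × ℤ) := Multiplicative.ofAdd (0, 1)

open Multiplicative

section PairHom

variable {G H : Type*} [Group G] [Group H] {s t : G}

def pairHom (h : Commute s t) : Multiplicative (ℤ × ℤ) →* G :=
  ((zpowersHom G s).noncommCoprod (zpowersHom G t) fun _ _ => h.zpow_zpow _ _).comp
    (MulEquiv.prodMultiplicative ℤ ℤ).toMonoidHom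

lemma pairHom_apply (h : Commute s t) (p : Multiplicative (ℤ × ℤ)) :
    pairHom h p = s ^ (toAdd p).1 * t ^ (toAdd p).2 := rfl

@[simp] lemma pairHom_e₁ (h : Commute s t) : pairHom h e₁ = s := by
  simp [pairHom_apply, e₁]

@[simp] lemma pairHom_e₂ (h : Commute s t) : pairHom h e₂ = t := by
  simp [pairHom_apply, e₂]

lemma hom_ext_e₁_e₂ {f g : Multiplicative (ℤ × ℤ) →* G} (h₁ : f e₁ = g e₁) (h₂ : f e₂ = g e₂) :
    f = g := by
  refine MonoidHom.ext fun p => ?_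
  have hp : p = e₁ ^ (toAdd p).1 * e₂ ^ (toAdd p).2 := by
    apply toAdd.injective
    simp [e₁, e₂]
  rw [hp, map_mul, map_mul, map_zpow, map_zpow, map_zpow, map_zpow, h₁, h₂]

lemma eq_zero_and_eq_zero_of_zpow_mul_zpow_eq_one (χ : G →* H) (hs : ¬IsOfFinOrder (χ s))
    (ht : ¬IsOfFinOrder t) (hχt : χ t = 1) {m n : ℤ} (h : s ^ m * t ^ n = 1) :
    m = 0 ∧ n = 0 := by
  have hm : m = 0 := injective_zpow_iff_not_isOfFinOrder.2 hs <| by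
    simpa [hχt] using congrArg χ h
  subst hm
  exact ⟨rfl, injective_zpow_iff_not_isOfFinOrder.2 ht (by simpa using h)⟩

lemma pairHom_injective (h : Commute s t) (χ : G →* H) (hs : ¬IsOfFinOrder (χ s))
    (ht : ¬IsOfFinOrder t) (hχt : χ t = 1) : Function.Injective (pairHom h) := by
  refine (injective_iff_map_eq_one _).2 fun p hp => ?_
  obtain ⟨h₁, h₂⟩ := eq_zero_and_eq_zero_of_zpow_mul_zpow_eq_one χ hs ht hχt hp
  exact toAdd.injective (Prod.ext h₁ h₂)

lemma pairHom_injective' (h : Commute s t) (χ : G →* H) (hs : ¬IsOfFinOrder s)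
    (ht : ¬IsOfFinOrder (χ t)) (hχs : χ s = 1) : Function.Injective (pairHom h) := by
  refine (injective_iff_map_eq_one _).2 fun p hp => ?_
  rw [pairHom_apply, (h.zpow_zpow _ _).eq] at hp
  obtain ⟨h₂, h₁⟩ := eq_zero_and_eq_zero_of_zpow_mul_zpow_eq_one χ ht hs hχs hp
  exact toAdd.injective (Prod.ext h₁ h₂)

end PairHom

lemma commute_pow_of_mul_mul_inv_mul_eq_one {G : Type*} [Group G] {u v : G}
    (h : u * v * u⁻¹ * v = 1) {n : ℕ} (hn : Even n) : Commute (u ^ n) v := by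
  have hconj : u * v * u⁻¹ = v⁻¹ := mul_eq_one_iff_eq_inv.1 h
  have hsq : Commute (u ^ 2) v := by
    rw [Commute, SemiconjBy, ← mul_inv_eq_iff_eq_mul]
    calc u ^ 2 * v * (u ^ 2)⁻¹ = u * (u * v * u⁻¹) * u⁻¹ := by rw [pow_two]; group
      _ = u * v⁻¹ * u⁻¹ := by rw [hconj]
      _ = (u * v * u⁻¹)⁻¹ := by group
      _ = v := by rw [hconj, inv_inv]
  obtain ⟨m, rfl⟩ := hn
  rw [← two_mul, pow_mul]
  exact hsq.pow_left m

lemma even_two_pow {k : ℕ} (hk : 0 < k) : Even (2 ^ k) :=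
  (Nat.even_pow' hk.ne').2 even_two

lemma DihedralGroup.sr_mul_r_mul_inv_mul_r {n : ℕ} (i j : ZMod n) :
    sr i * r j * (sr i)⁻¹ * r j = 1 := by
  rw [DihedralGroup.inv_sr, DihedralGroup.sr_mul_r, DihedralGroup.sr_mul_sr,
    DihedralGroup.r_mul_r, DihedralGroup.one_def]
  ring_nf

lemma DihedralGroup.not_isOfFinOrder_r_one : ¬IsOfFinOrder (r 1 : DihedralGroup 0) := by
  rw [← orderOf_eq_zero_iff, DihedralGroup.orderOf_r_one]

lemma not_isOfFinOrder_ofAdd_one_pow {n : ℕ} (hn : n ≠ 0) :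
    ¬IsOfFinOrder (ofAdd (1 : ℤ) ^ n) := by
  rw [isOfFinOrder_pow, not_or]
  exact ⟨not_isOfFinOrder_of_isMulTorsionFree (by decide), hn⟩

namespace K₁

variable {G : Type*} [Group G]

def lift (u v : G) (h : u * v * u⁻¹ * v = 1) : K₁ →* G :=
  PresentedGroup.toGroup (f := ![u, v]) (by rintro _ rfl; simpa using h)

@[simp] lemma lift_ka (u v : G) (h : u * v * u⁻¹ * v = 1) : lift u v h ka = u :=
  PresentedGroup.toGroup.of _

@[simp] lemma lift_kx (u v : G) (h : u * v * u⁻¹ * v = 1) : lift u v h kx = v :=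
  PresentedGroup.toGroup.of _

lemma hom_ext {f g : K₁ →* G} (ha : f ka = g ka) (hx : f kx = g kx) : f = g :=
  PresentedGroup.ext fun i => by fin_cases i; exacts [ha, hx]

lemma rel : ka * kx * ka⁻¹ * kx = 1 := by
  have h : PresentedGroup.mk _ (FreeGroup.of 0 * FreeGroup.of 1 * (FreeGroup.of 0)⁻¹ *
      FreeGroup.of 1) = (1 : K₁) := PresentedGroup.one_of_mem rfl
  rwa [map_mul, map_mul, map_mul, map_inv] at h

lemma commute_ka_pow {n : ℕ} (hn : Even n) : Commute (ka ^ n) kx :=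
  commute_pow_of_mul_mul_inv_mul_eq_one rel hn

lemma pairHom_injective {n : ℕ} (hn : Even n) (hn₀ : n ≠ 0) :
    Function.Injective (pairHom (commute_ka_pow hn)) := by
  refine _root_.pairHom_injective _ (lift (ofAdd (1 : ℤ)) 1 (by group)) ?_ ?_ (lift_kx ..)
  · rw [map_pow, lift_ka]
    exact not_isOfFinOrder_ofAdd_one_pow hn₀
  · intro hx
    refine DihedralGroup.not_isOfFinOrder_r_one ?_
    simpa using (lift _ _ (DihedralGroup.sr_mul_r_mul_inv_mul_r 0 1)).isOfFinOrder hx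

end K₁

namespace K₂

variable {G : Type*} [Group G]

def lift (y b : G) (h : b * y * b⁻¹ * y = 1) : K₂ →* G :=
  PresentedGroup.toGroup (f := ![y, b]) (by rintro _ rfl; simpa using h)

@[simp] lemma lift_ky (y b : G) (h : b * y * b⁻¹ * y = 1) : lift y b h ky = y :=
  PresentedGroup.toGroup.of _

@[simp] lemma lift_kb (y b : G) (h : b * y * b⁻¹ * y = 1) : lift y b h kb = b :=
  PresentedGroup.toGroup.of _

lemma hom_ext {f g : K₂ →* G} (hy : f ky = g ky) (hb : f kb = g kb) : f = g :=
  PresentedGroup.ext fun i => by fin_cases i; exacts [hy, hb]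

lemma rel : kb * ky * kb⁻¹ * ky = 1 := by
  have h : PresentedGroup.mk _ (FreeGroup.of 1 * FreeGroup.of 0 * (FreeGroup.of 1)⁻¹ *
      FreeGroup.of 0) = (1 : K₂) := PresentedGroup.one_of_mem rfl
  rwa [map_mul, map_mul, map_mul, map_inv] at h

lemma commute_kb_pow {n : ℕ} (hn : Even n) : Commute ky (kb ^ n) :=
  (commute_pow_of_mul_mul_inv_mul_eq_one rel hn).symm

lemma pairHom_injective {n : ℕ} (hn : Even n) (hn₀ : n ≠ 0) :
    Function.Injective (pairHom (commute_kb_pow hn)) := by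
  refine pairHom_injective' _ (lift 1 (ofAdd (1 : ℤ)) (by group)) ?_ ?_ (lift_ky ..)
  · intro hy
    refine DihedralGroup.not_isOfFinOrder_r_one ?_
    simpa using (lift _ _ (DihedralGroup.sr_mul_r_mul_inv_mul_r 0 1)).isOfFinOrder hy
  · rw [map_pow, lift_kb]
    exact not_isOfFinOrder_ofAdd_one_pow hn₀

end K₂

namespace Pk

variable {k : ℕ} {G : Type*} [Group G]

def pa (k : ℕ) : Pk k := PresentedGroup.of 0

def pb (k : ℕ) : Pk k := PresentedGroup.of 1

def lift (A B : G) (h₁ : A * B ^ 2 ^ k * A⁻¹ * B ^ 2 ^ k = 1)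
    (h₂ : B * A ^ 2 * B⁻¹ * A ^ 2 = 1) : Pk k →* G :=
  PresentedGroup.toGroup (f := ![A, B]) <| by
    rintro _ (rfl | rfl)
    · simpa using h₁
    · simpa using h₂

@[simp] lemma lift_pa (A B : G) (h₁ : A * B ^ 2 ^ k * A⁻¹ * B ^ 2 ^ k = 1)
    (h₂ : B * A ^ 2 * B⁻¹ * A ^ 2 = 1) : lift A B h₁ h₂ (pa k) = A :=
  PresentedGroup.toGroup.of _

@[simp] lemma lift_pb (A B : G) (h₁ : A * B ^ 2 ^ k * A⁻¹ * B ^ 2 ^ k = 1)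
    (h₂ : B * A ^ 2 * B⁻¹ * A ^ 2 = 1) : lift A B h₁ h₂ (pb k) = B :=
  PresentedGroup.toGroup.of _

lemma hom_ext {f g : Pk k →* G} (ha : f (pa k) = g (pa k)) (hb : f (pb k) = g (pb k)) :
    f = g :=
  PresentedGroup.ext fun i => by fin_cases i; exacts [ha, hb]

lemma rel₁ : pa k * pb k ^ 2 ^ k * (pa k)⁻¹ * pb k ^ 2 ^ k = 1 := by
  have h : PresentedGroup.mk _ (FreeGroup.of 0 * FreeGroup.of 1 ^ 2 ^ k * (FreeGroup.of 0)⁻¹ *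
      FreeGroup.of 1 ^ 2 ^ k) = (1 : Pk k) := PresentedGroup.one_of_mem (Set.mem_insert _ _)
  rwa [map_mul, map_mul, map_mul, map_inv, map_pow] at h

lemma rel₂ : pb k * pa k ^ 2 * (pb k)⁻¹ * pa k ^ 2 = 1 := by
  have h : PresentedGroup.mk _ (FreeGroup.of 1 * FreeGroup.of 0 ^ 2 * (FreeGroup.of 1)⁻¹ *
      FreeGroup.of 0 ^ 2) = (1 : Pk k) := PresentedGroup.one_of_mem (Set.mem_insert_of_mem _ rfl)
  rwa [map_mul, map_mul, map_mul, map_inv, map_pow] at h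

end Pk

def kleinAmalgamMaps (k : ℕ) (hk : 0 < k) : ∀ i : Bool, Multiplicative (ℤ × ℤ) →* kleinFam i
  | true => pairHom (K₁.commute_ka_pow even_two)
  | false => pairHom (K₂.commute_kb_pow (even_two_pow hk))

abbrev KleinAmalgam (k : ℕ) (hk : 0 < k) : Type := Monoid.PushoutI (kleinAmalgamMaps k hk)

namespace KleinAmalgam

open Monoid.PushoutI

variable (k : ℕ) (hk : 0 < k)

lemma maps_true_e₁ : kleinAmalgamMaps k hk true e₁ = (ka : kleinFam true) ^ 2 :=
  pairHom_e₁ (K₁.commute_ka_pow even_two)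

lemma maps_true_e₂ : kleinAmalgamMaps k hk true e₂ = (kx : kleinFam true) :=
  pairHom_e₂ (K₁.commute_ka_pow even_two)

lemma maps_false_e₁ : kleinAmalgamMaps k hk false e₁ = (ky : kleinFam false) :=
  pairHom_e₁ (K₂.commute_kb_pow (even_two_pow hk))

lemma maps_false_e₂ : kleinAmalgamMaps k hk false e₂ = (kb : kleinFam false) ^ 2 ^ k :=
  pairHom_e₂ (K₂.commute_kb_pow (even_two_pow hk))

def ofK₁ : K₁ →* KleinAmalgam k hk := of (φ := kleinAmalgamMaps k hk) true

def ofK₂ : K₂ →* KleinAmalgam k hk := of (φ := kleinAmalgamMaps k hk) false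

lemma ofK₁_comp_pairHom :
    (ofK₁ k hk).comp (pairHom (K₁.commute_ka_pow even_two)) = base _ :=
  of_comp_eq_base (φ := kleinAmalgamMaps k hk) true

lemma ofK₂_comp_pairHom :
    (ofK₂ k hk).comp (pairHom (K₂.commute_kb_pow (even_two_pow hk))) = base _ :=
  of_comp_eq_base (φ := kleinAmalgamMaps k hk) false

lemma ofK₁_ka_sq : ofK₁ k hk (ka ^ 2) = ofK₂ k hk ky := by
  have h₁ := DFunLike.congr_fun (ofK₁_comp_pairHom k hk) e₁
  have h₂ := DFunLike.congr_fun (ofK₂_comp_pairHom k hk) e₁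
  rw [MonoidHom.comp_apply, pairHom_e₁] at h₁ h₂
  rw [h₁, h₂]

lemma ofK₁_kx : ofK₁ k hk kx = ofK₂ k hk (kb ^ 2 ^ k) := by
  have h₁ := DFunLike.congr_fun (ofK₁_comp_pairHom k hk) e₂
  have h₂ := DFunLike.congr_fun (ofK₂_comp_pairHom k hk) e₂
  rw [MonoidHom.comp_apply, pairHom_e₂] at h₁ h₂
  rw [h₁, h₂]

end KleinAmalgam

namespace Pk

open KleinAmalgam

variable (k : ℕ) (hk : 0 < k)

lemma commute_pa_sq_pb_pow : Commute (pa k ^ 2) (pb k ^ 2 ^ k) :=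
  commute_pow_of_mul_mul_inv_mul_eq_one rel₁ even_two

def toKleinAmalgam : Pk k →* KleinAmalgam k hk :=
  lift (ofK₁ k hk ka) (ofK₂ k hk kb)
    (by rw [← map_pow, ← ofK₁_kx, ← map_inv, ← map_mul, ← map_mul, ← map_mul, K₁.rel, map_one])
    (by rw [← map_pow, ofK₁_ka_sq, ← map_inv, ← map_mul, ← map_mul, ← map_mul, K₂.rel, map_one])

def ofKleinFam : ∀ i : Bool, kleinFam i →* Pk k
  | true => K₁.lift (pa k) (pb k ^ 2 ^ k) rel₁
  | false => K₂.lift (pa k ^ 2) (pb k) rel₂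

def ofKleinAmalgam : KleinAmalgam k hk →* Pk k :=
  Monoid.PushoutI.lift (ofKleinFam k) (pairHom (commute_pa_sq_pb_pow k)) <| by
    rintro (_ | _)
    · show (K₂.lift _ _ rel₂).comp (pairHom (K₂.commute_kb_pow (even_two_pow hk))) = _
      exact hom_ext_e₁_e₂ (by simp) (by simp)
    · show (K₁.lift _ _ rel₁).comp (pairHom (K₁.commute_ka_pow even_two)) = _
      exact hom_ext_e₁_e₂ (by simp) (by simp)

@[simp] lemma toKleinAmalgam_pa : toKleinAmalgam k hk (pa k) = ofK₁ k hk ka := lift_pa ..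

@[simp] lemma toKleinAmalgam_pb : toKleinAmalgam k hk (pb k) = ofK₂ k hk kb := lift_pb ..

@[simp] lemma ofKleinAmalgam_ofK₁ (g : K₁) :
    ofKleinAmalgam k hk (ofK₁ k hk g) = K₁.lift (pa k) (pb k ^ 2 ^ k) rel₁ g :=
  Monoid.PushoutI.lift_of ..

@[simp] lemma ofKleinAmalgam_ofK₂ (g : K₂) :
    ofKleinAmalgam k hk (ofK₂ k hk g) = K₂.lift (pa k ^ 2) (pb k) rel₂ g :=
  Monoid.PushoutI.lift_of ..

def equivKleinAmalgam : Pk k ≃* KleinAmalgam k hk :=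
  MonoidHom.toMulEquiv (toKleinAmalgam k hk) (ofKleinAmalgam k hk)
    (hom_ext (by simp) (by simp)) <| by
    refine Monoid.PushoutI.hom_ext_nonempty ?_
    rintro (_ | _)
    · show ((toKleinAmalgam k hk).comp (ofKleinAmalgam k hk)).comp (ofK₂ k hk) = ofK₂ k hk
      exact K₂.hom_ext (by simp [← ofK₁_ka_sq]) (by simp)
    · show ((toKleinAmalgam k hk).comp (ofKleinAmalgam k hk)).comp (ofK₁ k hk) = ofK₁ k hk
      exact K₁.hom_ext (by simp) (by simp [ofK₁_kx])

end Pk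

/-- `P_k` is the amalgamated free product `K₁ *_{ℤ²} K₂` of two Klein bottle groups,
amalgamated along `⟨a², x⟩ ≅ ℤ²` and `⟨b^(2^k), y⟩ ≅ ℤ²` via `x ↦ b^(2^k)`, `a² ↦ y`:
there are injective homomorphisms `φ true : ℤ² → K₁` and `φ false : ℤ² → K₂` with
`φ true e₁ = a²`, `φ true e₂ = x`, `φ false e₁ = y`, `φ false e₂ = b^(2^k)` (so the
identification sends `a² ↦ y` and `x ↦ b^(2^k)`), and `P_k` is isomorphic to the
pushout (amalgamated product) of this diagram. -/
theorem Pk_is_amalgam_of_klein_bottle_groups (k : ℕ) (hk : 0 < k) :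
    ∃ φ : ∀ i : Bool, Multiplicative (ℤ × ℤ) →* kleinFam i,
      Function.Injective (φ true) ∧ Function.Injective (φ false) ∧
      φ true e₁ = (ka : kleinFam true) ^ 2 ∧ φ true e₂ = (kx : kleinFam true) ∧
      φ false e₁ = (ky : kleinFam false) ∧ φ false e₂ = (kb : kleinFam false) ^ (2 ^ k) ∧
      Nonempty (Pk k ≃* Monoid.PushoutI φ) :=
  ⟨kleinAmalgamMaps k hk, K₁.pairHom_injective even_two two_ne_zero,
    K₂.pairHom_injective (even_two_pow hk) (pow_ne_zero k two_ne_zero),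
    KleinAmalgam.maps_true_e₁ k hk, KleinAmalgam.maps_true_e₂ k hk,
    KleinAmalgam.maps_false_e₁ k hk, KleinAmalgam.maps_false_e₂ k hk,
    ⟨Pk.equivKleinAmalgam k hk⟩⟩
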